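/- Let Σ ⊆ L_inv be finite, contain 𝟏 and 𝟎, and be closed under taking subformulas, and let M = ⟨F,v⟩ be a tree-like KGinv-model of finite height h with root w. Then there is a tree-like KGinvF-model M̂ = ⟨F̂,T̂,v̂⟩ with root w whose underlying frame F̂ is a subframe of F, such that the number of worlds of M̂ is at most |Σ|^h, |T̂(w')| ≤ |Σ| for every world w' of M̂, and v(φ,w) = v̂(φ,w) for every φ ∈ Σ. Moreover, if M is crisp then M̂ is crisp. -/

import Mathlib

noncomputable def Gimp (x y : ℝ) : ℝ := if x ≤ y then 1 else y

inductive Fml : Type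
  | var : ℕ → Fml
  | inv : Fml → Fml
  | and : Fml → Fml → Fml
  | imp : Fml → Fml → Fml
  | box : Fml → Fml
  | dia : Fml → Fml
  deriving DecidableEq

noncomputable def Fml.eval {W : Type} (R : W → W → ℝ) (v : ℕ → W → ℝ) : Fml → W → ℝ
  | .var p, w => v p w
  | .inv φ, w => 1 - Fml.eval R v φ w
  | .and φ χ, w => min (Fml.eval R v φ w) (Fml.eval R v χ w)
  | .imp φ χ, w => Gimp (Fml.eval R v φ w) (Fml.eval R v χ w)
  | .box φ, w => sInf (Set.range fun w' => Gimp (R w w') (Fml.eval R v φ w'))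
  | .dia φ, w => sSup (Set.range fun w' => min (R w w') (Fml.eval R v φ w'))

def KGinvValid {W : Type} (R : W → W → ℝ) (φ : Fml) : Prop :=
  ∀ v : ℕ → W → ℝ, (∀ p w, v p w ∈ Set.Icc (0:ℝ) 1) → ∀ w : W, Fml.eval R v φ w = 1

/-- An F-model: the data of a fuzzy frame with finitely many admissible modal values
at each state, together with a valuation. -/
structure FModel (W : Type) where
  R : W → W → ℝ
  T : W → Set ℝ
  v : ℕ → W → ℝ

/-- The conditions on the data of an F-model. -/
def FModel.Good {W : Type} (M : FModel W) : Prop :=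
  (∀ w w', M.R w w' ∈ Set.Icc (0:ℝ) 1) ∧
  (∀ w, (M.T w).Finite) ∧
  (∀ w, M.T w ⊆ Set.Icc (0:ℝ) 1) ∧
  (∀ w, (0:ℝ) ∈ M.T w ∧ (1:ℝ) ∈ M.T w) ∧
  (∀ p w, M.v p w ∈ Set.Icc (0:ℝ) 1)

noncomputable def FModel.eval {W : Type} (M : FModel W) : Fml → W → ℝ
  | .var p, w => M.v p w
  | .inv φ, w => 1 - FModel.eval M φ w
  | .and φ χ, w => min (FModel.eval M φ w) (FModel.eval M χ w)
  | .imp φ χ, w => Gimp (FModel.eval M φ w) (FModel.eval M χ w)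
  | .box φ, w =>
      sSup {x | x ∈ M.T w ∧
        x ≤ sInf (Set.range fun w' => Gimp (M.R w w') (FModel.eval M φ w'))}
  | .dia φ, w =>
      sInf {x | x ∈ M.T w ∧
        sSup (Set.range fun w' => min (M.R w w') (FModel.eval M φ w')) ≤ x}

/-- The accessibility graph of a fuzzy relation. -/
def Epos {W : Type} (R : W → W → ℝ) : W → W → Prop := fun a b => 0 < R a b

/-- The directed graph E on W is a tree with root r. -/
def IsTreeLike {W : Type} (E : W → W → Prop) (r : W) : Prop :=
  (∀ w, Relation.ReflTransGen E r w) ∧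
  (∀ w, ¬ E w r) ∧
  (∀ u u' w, E u w → E u' w → u = u') ∧
  (∀ w, ¬ Relation.TransGen E w w)

/-- Every E-path starting at the root r has length at most n. -/
def HeightLE {W : Type} (E : W → W → Prop) (r : W) (n : ℕ) : Prop :=
  ∀ (k : ℕ) (f : ℕ → W), f 0 = r → (∀ i, i < k → E (f i) (f (i+1))) → k ≤ n

def Fml.One : Fml := .imp (.var 0) (.var 0)
def Fml.Zero : Fml := .inv Fml.One

/-- The immediate subformulas of a formula. -/
def Fml.imSubs : Fml → List Fml
  | .var _ => []
  | .inv φ => [φ]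
  | .and φ χ => [φ, χ]
  | .imp φ χ => [φ, χ]
  | .box φ => [φ]
  | .dia φ => [φ]

/-!
In an F-model a modal value only has to be known up to rounding to the finite set `T(a)` of
truth values of `Σ` at `a`. So for `□ψ ∈ Σ` a single successor of `a` suffices: one whose term
`R(a,c) ⇒ v(ψ,c)` lies below the least element of `T(a)` exceeding `v(□ψ,a)`; dually for `◇ψ`.
Keeping from the root only such witnesses, at most `|Σ| - 1` per world, down to height `h` gives a
subtree with at most `|Σ|^h` worlds. On any set of worlds closed under witnesses, the F-model with
admissible values `T(a)` agrees with the original model on `Σ`, by induction on formulas: the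
infimum over the subset is at least the original one, and its witness pushes it below every
larger truth value, so rounding down to `T(a)` returns `v(□ψ,a)`.
-/

open Set Finset Relation

section RoundingToFiniteSets

variable {α ι : Type*} [ConditionallyCompleteLinearOrder α]

theorem Set.Finite.exists_forall_lt_of_ciInf_lt [Nonempty ι] {T : Set α} (hT : T.Finite)
    (f : ι → α) : ∃ i, ∀ t ∈ T, iInf f < t → f i < t := by
  by_cases hne : {t ∈ T | iInf f < t}.Nonempty
  · obtain ⟨t₀, ⟨-, ht₀⟩, hmin⟩ := Set.exists_min_image _ id (hT.subset (sep_subset _ _)) hne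
    obtain ⟨i, hi⟩ := exists_lt_of_ciInf_lt ht₀
    exact ⟨i, fun t ht hlt => hi.trans_le (hmin t ⟨ht, hlt⟩)⟩
  · exact ⟨Classical.arbitrary ι, fun t ht hlt => absurd ⟨t, ht, hlt⟩ hne⟩

theorem Set.Finite.exists_forall_lt_of_lt_ciSup [Nonempty ι] {T : Set α} (hT : T.Finite)
    (f : ι → α) : ∃ i, ∀ t ∈ T, t < iSup f → t < f i :=
  hT.exists_forall_lt_of_ciInf_lt (α := αᵒᵈ) f

theorem csSup_setOf_mem_and_le_eq {T : Set α} {a b : α} (ha : a ∈ T) (hab : a ≤ b)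
    (hT : ∀ t ∈ T, a < t → b < t) : sSup {x | x ∈ T ∧ x ≤ b} = a :=
  IsGreatest.csSup_eq ⟨⟨ha, hab⟩, fun x ⟨hx, hxb⟩ => not_lt.1 fun hax => (hT x hx hax).not_ge hxb⟩

theorem csInf_setOf_mem_and_ge_eq {T : Set α} {a b : α} (ha : a ∈ T) (hba : b ≤ a)
    (hT : ∀ t ∈ T, t < a → t < b) : sInf {x | x ∈ T ∧ b ≤ x} = a :=
  csSup_setOf_mem_and_le_eq (α := αᵒᵈ) ha hba hT

end RoundingToFiniteSets

section Trees

variable {W : Type} {E : W → W → Prop}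

theorem HeightLE.of_edge {r x : W} {n : ℕ} (hr : HeightLE E r (n + 1)) (hx : E r x) :
    HeightLE E x n := by
  intro k f hf0 hf
  have := hr (k + 1) (fun i => Nat.casesOn i r f) rfl fun i hi => by
    cases i with
    | zero => simpa [hf0] using hx
    | succ j => exact hf j (by omega)
  omega

theorem HeightLE.not_edge_of_zero {r x : W} (hr : HeightLE E r 0) : ¬ E r x := fun hx => by
  have := hr 1 (fun i => if i = 0 then r else x) rfl (by simpa using hx)
  omega

theorem IsTreeLike.restrict {r : W} (htree : IsTreeLike E r) {S : Set W} (hr : r ∈ S)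
    (hreach : ∀ s : S, ReflTransGen (fun a b : S => E a b) ⟨r, hr⟩ s) :
    IsTreeLike (fun a b : S => E a b) ⟨r, hr⟩ :=
  ⟨hreach, fun s => htree.2.1 s, fun _ _ _ hac hbc => Subtype.ext (htree.2.2.1 _ _ _ hac hbc),
    fun s hs => htree.2.2.2 s (hs.lift Subtype.val fun _ _ h => h)⟩

variable [DecidableEq W] (C : W → Finset W)

def prunedTree : ℕ → W → Finset W
  | 0, r => {r}
  | k + 1, r => insert r ((C r).biUnion (prunedTree k))

theorem mem_prunedTree_self (k : ℕ) (r : W) : r ∈ prunedTree C k r := by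
  cases k <;> simp [prunedTree]

theorem card_prunedTree_le {n : ℕ} (hC : ∀ a, (C a).card + 1 ≤ n) (k : ℕ) (r : W) :
    (prunedTree C k r).card ≤ n ^ k := by
  induction k generalizing r with
  | zero => simp [prunedTree]
  | succ k ih =>
    have hn : 1 ≤ n ^ k := Nat.one_le_pow _ _ (by linarith [hC r])
    calc (prunedTree C (k + 1) r).card ≤ ((C r).biUnion (prunedTree C k)).card + 1 :=
          card_insert_le _ _
      _ ≤ (C r).card * n ^ k + n ^ k :=
          add_le_add (card_biUnion_le_card_mul _ _ _ fun c _ => ih c) hn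
      _ = ((C r).card + 1) * n ^ k := by ring
      _ ≤ n ^ (k + 1) := by rw [pow_succ']; exact Nat.mul_le_mul_right _ (hC r)

variable {C}

theorem prunedTree_closed (hCE : ∀ a, ∀ c ∈ C a, E a c) {k : ℕ} {r x : W}
    (hr : HeightLE E r k) (hx : x ∈ prunedTree C k r) : C x ⊆ prunedTree C k r := by
  induction k generalizing r with
  | zero =>
    obtain rfl : x = r := by simpa [prunedTree] using hx
    exact fun c hc => absurd (hCE x c hc) hr.not_edge_of_zero
  | succ k ih =>
    simp only [prunedTree, Finset.mem_insert, Finset.mem_biUnion] at hx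
    rcases hx with rfl | ⟨c, hc, hxc⟩
    · exact fun c hc => Finset.mem_insert_of_mem
        (Finset.mem_biUnion.2 ⟨c, hc, mem_prunedTree_self C k c⟩)
    · exact (ih (hr.of_edge (hCE r c hc)) hxc).trans
        ((Finset.subset_biUnion_of_mem _ hc).trans (Finset.subset_insert _ _))

theorem reflTransGen_prunedTree (hCE : ∀ a, ∀ c ∈ C a, E a c) {k : ℕ} {r x : W}
    (hx : x ∈ prunedTree C k r) :
    ReflTransGen (fun a b : (prunedTree C k r : Set W) => E a b)
      ⟨r, mem_prunedTree_self C k r⟩ ⟨x, hx⟩ := by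
  induction k generalizing r with
  | zero =>
    obtain rfl : x = r := by simpa [prunedTree] using hx
    rfl
  | succ k ih =>
    simp only [prunedTree, Finset.mem_insert, Finset.mem_biUnion] at hx
    rcases hx with rfl | ⟨c, hc, hxc⟩
    · rfl
    · have hsub : (prunedTree C k c : Set W) ⊆ prunedTree C (k + 1) r := by
        rw [Finset.coe_subset]
        exact (Finset.subset_biUnion_of_mem _ hc).trans (Finset.subset_insert _ _)
      have hlift := ReflTransGen.lift (p := fun a b : (prunedTree C (k + 1) r : Set W) => E a b)
        (Set.inclusion hsub) (fun _ _ h => h) _ _ (ih hxc)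
      exact ReflTransGen.head (hCE r c hc) hlift

end Trees

theorem Gimp_nonneg {x y : ℝ} (hy : 0 ≤ y) : 0 ≤ Gimp x y := by
  unfold Gimp; split_ifs <;> linarith

theorem Gimp_le_one {x y : ℝ} (hy : y ≤ 1) : Gimp x y ≤ 1 := by
  unfold Gimp; split_ifs <;> linarith

theorem Gimp_self (x : ℝ) : Gimp x x = 1 := if_pos le_rfl

theorem lt_of_Gimp_lt_one {x y : ℝ} (h : Gimp x y < 1) : y < x := by
  unfold Gimp at h; split_ifs at h with hxy
  · exact absurd h (lt_irrefl 1)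
  · exact not_le.1 hxy

section KGinvModels

variable {W : Type} (R : W → W → ℝ) (v : ℕ → W → ℝ)

theorem Fml.eval_One (a : W) : Fml.eval R v Fml.One a = 1 := Gimp_self _

theorem Fml.eval_Zero (a : W) : Fml.eval R v Fml.Zero a = 0 := by
  simp [Fml.Zero, Fml.eval, Fml.eval_One]

variable {R v}

theorem Fml.eval_mem_Icc [Nonempty W] (hR : ∀ a b, R a b ∈ Icc (0 : ℝ) 1)
    (hv : ∀ p a, v p a ∈ Icc (0 : ℝ) 1) (φ : Fml) (a : W) : Fml.eval R v φ a ∈ Icc (0 : ℝ) 1 := by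
  obtain ⟨w₀⟩ := ‹Nonempty W›
  induction φ generalizing a with
  | var p => exact hv p a
  | inv φ ih => exact ⟨sub_nonneg.2 (ih a).2, sub_le_self _ (ih a).1⟩
  | and φ χ ihφ ihχ => exact ⟨le_min (ihφ a).1 (ihχ a).1, min_le_of_left_le (ihφ a).2⟩
  | imp φ χ _ ihχ => exact ⟨Gimp_nonneg (ihχ a).1, Gimp_le_one (ihχ a).2⟩
  | box φ ih =>
    have hbdd : BddBelow (range fun b => Gimp (R a b) (Fml.eval R v φ b)) :=
      ⟨0, forall_mem_range.2 fun b => Gimp_nonneg (ih b).1⟩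
    exact ⟨le_ciInf fun b => Gimp_nonneg (ih b).1,
      ciInf_le_of_le hbdd w₀ (Gimp_le_one (ih w₀).2)⟩
  | dia φ ih =>
    have hbdd : BddAbove (range fun b => min (R a b) (Fml.eval R v φ b)) :=
      ⟨1, forall_mem_range.2 fun b => min_le_of_left_le (hR a b).2⟩
    exact ⟨le_ciSup_of_le hbdd w₀ (le_min (hR a w₀).1 (ih w₀).1),
      ciSup_le fun b => min_le_of_left_le (hR a b).2⟩

variable (R v) (Sg : Finset Fml)

noncomputable def truthValues (a : W) : Finset ℝ := Sg.image fun φ => Fml.eval R v φ a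

def IsWitness (a c : W) : Fml → Prop
  | .box ψ => ∀ t ∈ truthValues R v Sg a, Fml.eval R v (.box ψ) a < t →
      Gimp (R a c) (Fml.eval R v ψ c) < t
  | .dia ψ => ∀ t ∈ truthValues R v Sg a, t < Fml.eval R v (.dia ψ) a →
      t < min (R a c) (Fml.eval R v ψ c)
  | _ => True

theorem exists_isWitness [Nonempty W] (a : W) (φ : Fml) : ∃ c, IsWitness R v Sg a c φ := by
  cases φ with
  | box ψ => exact (truthValues R v Sg a).finite_toSet.exists_forall_lt_of_ciInf_lt _
  | dia ψ => exact (truthValues R v Sg a).finite_toSet.exists_forall_lt_of_lt_ciSup _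
  | _ => exact ⟨a, trivial⟩

def restrictModel (S : Set W) : FModel S where
  R a b := R a b
  T a := truthValues R v Sg a
  v p a := v p a

variable {R v Sg}

theorem truthValues_subset_Icc [Nonempty W] (hR : ∀ a b, R a b ∈ Icc (0 : ℝ) 1)
    (hv : ∀ p a, v p a ∈ Icc (0 : ℝ) 1) (a : W) : (truthValues R v Sg a : Set ℝ) ⊆ Icc 0 1 := by
  intro t ht
  obtain ⟨φ, -, rfl⟩ := Finset.mem_image.1 ht
  exact Fml.eval_mem_Icc hR hv φ a

theorem restrictModel_good [Nonempty W] (hR : ∀ a b, R a b ∈ Icc (0 : ℝ) 1)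
    (hv : ∀ p a, v p a ∈ Icc (0 : ℝ) 1) (hOne : Fml.One ∈ Sg) (hZero : Fml.Zero ∈ Sg)
    (S : Set W) : (restrictModel R v Sg S).Good :=
  ⟨fun a b => hR a b, fun a => (truthValues R v Sg a).finite_toSet,
    fun a => truthValues_subset_Icc hR hv a,
    fun a => ⟨Finset.mem_image.2 ⟨_, hZero, Fml.eval_Zero R v a⟩,
      Finset.mem_image.2 ⟨_, hOne, Fml.eval_One R v a⟩⟩,
    fun p a => hv p a⟩

theorem card_restrictModel_T_le (S : Set W) (a : S) :
    Nat.card ((restrictModel R v Sg S).T a) ≤ Sg.card := by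
  show Nat.card (truthValues R v Sg a : Set ℝ) ≤ _
  rw [Nat.card_coe_set_eq, ncard_coe_finset]
  exact Finset.card_image_le

theorem restrictModel_eval_box [Nonempty W] (hR : ∀ a b, R a b ∈ Icc (0 : ℝ) 1)
    (hv : ∀ p a, v p a ∈ Icc (0 : ℝ) 1) {S : Set W} {ψ : Fml} (hψ : Fml.box ψ ∈ Sg)
    (ih : ∀ b : S, (restrictModel R v Sg S).eval ψ b = Fml.eval R v ψ b) (a : S)
    (hwit : ∀ t ∈ truthValues R v Sg a, Fml.eval R v (.box ψ) a < t →
      ∃ c ∈ S, Gimp (R a c) (Fml.eval R v ψ c) < t) :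
    (restrictModel R v Sg S).eval (.box ψ) a = Fml.eval R v (.box ψ) a := by
  have : Nonempty S := ⟨a⟩
  have hbdd : BddBelow (range fun b => Gimp (R a b) (Fml.eval R v ψ b)) :=
    ⟨0, forall_mem_range.2 fun b => Gimp_nonneg (Fml.eval_mem_Icc hR hv ψ b).1⟩
  have hbddS : BddBelow (range fun b : S => Gimp (R a b) (Fml.eval R v ψ b)) :=
    hbdd.mono (range_subset_iff.2 fun b => mem_range_self (b : W))
  show sSup {x | x ∈ (truthValues R v Sg a : Set ℝ) ∧
    x ≤ ⨅ b : S, Gimp (R a b) ((restrictModel R v Sg S).eval ψ b)} = _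
  simp only [ih]
  refine csSup_setOf_mem_and_le_eq (Finset.mem_image.2 ⟨_, hψ, rfl⟩)
    (le_ciInf fun b => ciInf_le hbdd b) fun t ht hlt => ?_
  obtain ⟨c, hcS, hc⟩ := hwit t ht hlt
  exact (ciInf_le hbddS ⟨c, hcS⟩).trans_lt hc

theorem restrictModel_eval_dia [Nonempty W] (hR : ∀ a b, R a b ∈ Icc (0 : ℝ) 1)
    {S : Set W} {ψ : Fml} (hψ : Fml.dia ψ ∈ Sg)
    (ih : ∀ b : S, (restrictModel R v Sg S).eval ψ b = Fml.eval R v ψ b) (a : S)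
    (hwit : ∀ t ∈ truthValues R v Sg a, t < Fml.eval R v (.dia ψ) a →
      ∃ c ∈ S, t < min (R a c) (Fml.eval R v ψ c)) :
    (restrictModel R v Sg S).eval (.dia ψ) a = Fml.eval R v (.dia ψ) a := by
  have : Nonempty S := ⟨a⟩
  have hbdd : BddAbove (range fun b => min (R a b) (Fml.eval R v ψ b)) :=
    ⟨1, forall_mem_range.2 fun b => min_le_of_left_le (hR a b).2⟩
  have hbddS : BddAbove (range fun b : S => min (R a b) (Fml.eval R v ψ b)) :=
    hbdd.mono (range_subset_iff.2 fun b => mem_range_self (b : W))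
  show sInf {x | x ∈ (truthValues R v Sg a : Set ℝ) ∧
    ⨆ b : S, min (R a b) ((restrictModel R v Sg S).eval ψ b) ≤ x} = _
  simp only [ih]
  refine csInf_setOf_mem_and_ge_eq (Finset.mem_image.2 ⟨_, hψ, rfl⟩)
    (ciSup_le fun b => le_ciSup hbdd b) fun t ht hlt => ?_
  obtain ⟨c, hcS, hc⟩ := hwit t ht hlt
  exact hc.trans_le (le_ciSup hbddS ⟨c, hcS⟩)

theorem restrictModel_eval [Nonempty W] (hR : ∀ a b, R a b ∈ Icc (0 : ℝ) 1)
    (hv : ∀ p a, v p a ∈ Icc (0 : ℝ) 1) (hclosed : ∀ φ ∈ Sg, ∀ ψ ∈ φ.imSubs, ψ ∈ Sg)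
    {S : Set W}
    (hbox : ∀ a ∈ S, ∀ ψ, Fml.box ψ ∈ Sg → ∀ t ∈ truthValues R v Sg a,
      Fml.eval R v (.box ψ) a < t → ∃ c ∈ S, Gimp (R a c) (Fml.eval R v ψ c) < t)
    (hdia : ∀ a ∈ S, ∀ ψ, Fml.dia ψ ∈ Sg → ∀ t ∈ truthValues R v Sg a,
      t < Fml.eval R v (.dia ψ) a → ∃ c ∈ S, t < min (R a c) (Fml.eval R v ψ c)) :
    ∀ φ ∈ Sg, ∀ a : S, (restrictModel R v Sg S).eval φ a = Fml.eval R v φ a := by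
  intro φ
  induction φ with
  | var p => exact fun _ _ => rfl
  | inv φ ih =>
    intro hφ a
    simp only [FModel.eval, Fml.eval, ih (hclosed _ hφ φ (by simp [Fml.imSubs]))]
  | and φ χ ihφ ihχ =>
    intro hφ a
    simp only [FModel.eval, Fml.eval, ihφ (hclosed _ hφ φ (by simp [Fml.imSubs])),
      ihχ (hclosed _ hφ χ (by simp [Fml.imSubs]))]
  | imp φ χ ihφ ihχ =>
    intro hφ a
    simp only [FModel.eval, Fml.eval, ihφ (hclosed _ hφ φ (by simp [Fml.imSubs])),
      ihχ (hclosed _ hφ χ (by simp [Fml.imSubs]))]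
  | box ψ ih =>
    exact fun hφ a => restrictModel_eval_box hR hv hφ
      (ih (hclosed _ hφ ψ (by simp [Fml.imSubs]))) a (hbox a a.2 ψ hφ)
  | dia ψ ih =>
    exact fun hφ a => restrictModel_eval_dia hR hφ
      (ih (hclosed _ hφ ψ (by simp [Fml.imSubs]))) a (hdia a a.2 ψ hφ)

variable [DecidableEq W]

-- `Fml.One` is not modal and needs no witness; leaving it out gives the bound `Sg.card ^ h`.
noncomputable def witnessChildren (R : W → W → ℝ) (Sg : Finset Fml) (wit : W → Fml → W) (a : W) :
    Finset W :=
  ((Sg.erase Fml.One).image (wit a)).filter fun c => 0 < R a c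

theorem card_witnessChildren_add_one_le (hOne : Fml.One ∈ Sg) (wit : W → Fml → W) (a : W) :
    (witnessChildren R Sg wit a).card + 1 ≤ Sg.card :=
  calc (witnessChildren R Sg wit a).card + 1 ≤ ((Sg.erase Fml.One).image (wit a)).card + 1 :=
        Nat.add_le_add_right (Finset.card_filter_le _ _) 1
    _ ≤ (Sg.erase Fml.One).card + 1 := Nat.add_le_add_right Finset.card_image_le 1
    _ = Sg.card := Finset.card_erase_add_one hOne

theorem mem_witnessChildren {wit : W → Fml → W} {a : W} {φ : Fml} (hφ : φ ∈ Sg)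
    (hφOne : φ ≠ Fml.One) (hpos : 0 < R a (wit a φ)) : wit a φ ∈ witnessChildren R Sg wit a :=
  Finset.mem_filter.2 ⟨Finset.mem_image_of_mem _ (Finset.mem_erase.2 ⟨hφOne, hφ⟩), hpos⟩

section WitnessClosed

variable [Nonempty W] (hR : ∀ a b, R a b ∈ Icc (0 : ℝ) 1) (hv : ∀ p a, v p a ∈ Icc (0 : ℝ) 1)
  {wit : W → Fml → W} (hwit : ∀ a φ, IsWitness R v Sg a (wit a φ) φ) {S : Set W}
  (hS : ∀ a ∈ S, (witnessChildren R Sg wit a : Set W) ⊆ S)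
include hR hv hwit hS

theorem exists_mem_box_witness : ∀ a ∈ S, ∀ ψ, Fml.box ψ ∈ Sg → ∀ t ∈ truthValues R v Sg a,
    Fml.eval R v (.box ψ) a < t → ∃ c ∈ S, Gimp (R a c) (Fml.eval R v ψ c) < t := by
  intro a ha ψ hψ t ht hlt
  have hc := hwit a (.box ψ) t ht hlt
  have hpos : 0 < R a (wit a (.box ψ)) := (Fml.eval_mem_Icc hR hv ψ _).1.trans_lt
    (lt_of_Gimp_lt_one (hc.trans_le (truthValues_subset_Icc hR hv a ht).2))
  exact ⟨_, hS a ha (mem_witnessChildren hψ (by simp [Fml.One]) hpos), hc⟩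

theorem exists_mem_dia_witness : ∀ a ∈ S, ∀ ψ, Fml.dia ψ ∈ Sg → ∀ t ∈ truthValues R v Sg a,
    t < Fml.eval R v (.dia ψ) a → ∃ c ∈ S, t < min (R a c) (Fml.eval R v ψ c) := by
  intro a ha ψ hψ t ht hlt
  have hc := hwit a (.dia ψ) t ht hlt
  have hpos : 0 < R a (wit a (.dia ψ)) :=
    (truthValues_subset_Icc hR hv a ht).1.trans_lt (hc.trans_le (min_le_left _ _))
  exact ⟨_, hS a ha (mem_witnessChildren hψ (by simp [Fml.One]) hpos), hc⟩

end WitnessClosed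

end KGinvModels

/-- Every tree-like KGinv-model of finite height can be turned into a small
tree-like F-model on a subframe agreeing on a subformula-closed set Σ at the root;
crispness is preserved. -/
theorem statement18 (W : Type) [Nonempty W] (R : W → W → ℝ)
    (hR : ∀ w w', R w w' ∈ Set.Icc (0:ℝ) 1)
    (v : ℕ → W → ℝ) (hv : ∀ p w, v p w ∈ Set.Icc (0:ℝ) 1)
    (Sg : Finset Fml) (hOne : Fml.One ∈ Sg) (hZero : Fml.Zero ∈ Sg)
    (hclosed : ∀ φ ∈ Sg, ∀ ψ ∈ φ.imSubs, ψ ∈ Sg)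
    (w : W) (htree : IsTreeLike (Epos R) w) (h : ℕ) (hht : HeightLE (Epos R) w h) :
    ∃ (S : Set W) (hw : w ∈ S) (Mh : FModel S),
      S.Finite ∧
      Nat.card S ≤ Sg.card ^ h ∧
      Mh.Good ∧
      (∀ a b : S, Mh.R a b = R a b) ∧
      (∀ a : S, Nat.card (Mh.T a) ≤ Sg.card) ∧
      IsTreeLike (Epos Mh.R) ⟨w, hw⟩ ∧
      (∀ φ ∈ Sg, Mh.eval φ ⟨w, hw⟩ = Fml.eval R v φ w) ∧
      ((∀ a b, R a b = 0 ∨ R a b = 1) → ∀ a b : S, Mh.R a b = 0 ∨ Mh.R a b = 1) := by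
  classical
  choose wit hwit using exists_isWitness R v Sg
  set C := witnessChildren R Sg wit
  have hCE : ∀ a, ∀ c ∈ C a, Epos R a c := fun a c hc => (Finset.mem_filter.1 hc).2
  set S := prunedTree C h w
  have hS : ∀ a ∈ (S : Set W), (C a : Set W) ⊆ S :=
    fun a ha => Finset.coe_subset.2 (prunedTree_closed hCE hht ha)
  refine ⟨S, mem_prunedTree_self C h w, restrictModel R v Sg S, S.finite_toSet, ?_,
    restrictModel_good hR hv hOne hZero _, fun _ _ => rfl, card_restrictModel_T_le _,
    htree.restrict _ fun s => reflTransGen_prunedTree hCE s.2,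
    fun φ hφ => restrictModel_eval hR hv hclosed (exists_mem_box_witness hR hv hwit hS)
      (exists_mem_dia_witness hR hv hwit hS) φ hφ _,
    fun hcrisp a b => hcrisp a b⟩
  rw [Nat.card_coe_set_eq, ncard_coe_finset]
  exact card_prunedTree_le C (card_witnessChildren_add_one_le hOne wit) h w
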